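/- arXiv:2206.03403 — 3 statements merged into one kernel-verified Lean document; each statement's English description precedes it below -/
import Mathlib

section
/- Let G be a finite group, A a coprime group of automorphisms of G, and N an A-invariant normal subgroup of G such that every element of N is fixed by A (i.e. N = C_N(A)). Then [G,A] centralizes N. -/
/-- The subgroup `[G,A]` generated by all `g⁻¹ · αg` for `g ∈ G`, `α ∈ A`. -/
def autCommutatorSubgroup {G : Type*} [Group G] (A : Subgroup (MulAut G)) : Subgroup G :=
  Subgroup.closure {x | ∃ g : G, ∃ α ∈ A, x = g⁻¹ * α g}

section

variable {G : Type*} [Group G] {N : Subgroup G} [N.Normal]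

/-- Conjugation by `g` and by `f g` agree on `N`, because `f` fixes the conjugate `g n g⁻¹ ∈ N`. -/
theorem inv_mul_map_mem_centralizer_of_fixes (f : G →* G) (hf : ∀ n ∈ N, f n = n) (g : G) :
    g⁻¹ * f g ∈ Subgroup.centralizer (N : Set G) := by
  rw [Subgroup.mem_centralizer_iff]
  intro n hn
  have hconj : f g * n * (f g)⁻¹ = g * n * g⁻¹ := by
    have hfix_conj := hf _ (Subgroup.Normal.conj_mem ‹_› n hn g)
    rwa [map_mul, map_mul, map_inv, hf n hn] at hfix_conj
  calc n * (g⁻¹ * f g) = g⁻¹ * (g * n * g⁻¹) * f g := by group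
    _ = g⁻¹ * (f g * n * (f g)⁻¹) * f g := by rw [hconj]
    _ = g⁻¹ * f g * n := by group

theorem autCommutatorSubgroup_le_centralizer (A : Subgroup (MulAut G))
    (hfix : ∀ n ∈ N, ∀ α ∈ A, α n = n) :
    autCommutatorSubgroup A ≤ Subgroup.centralizer (N : Set G) := by
  rw [autCommutatorSubgroup, Subgroup.closure_le]
  rintro x ⟨g, α, hα, rfl⟩
  exact inv_mul_map_mem_centralizer_of_fixes α.toMonoidHom (fun n hn ↦ hfix n hn α hα) g

end

theorem commutator_centralizes_fixed_normal_general (G : Type*) [Group G]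
    (A : Subgroup (MulAut G))
    (N : Subgroup G) [N.Normal]
    (hfix : ∀ n ∈ N, ∀ α ∈ A, α n = n) :
    ∀ x ∈ autCommutatorSubgroup A, ∀ n ∈ N, x * n = n * x := fun _ hx n hn ↦
  (Subgroup.mem_centralizer_iff.mp (autCommutatorSubgroup_le_centralizer A hfix hx) n hn).symm

theorem commutator_centralizes_fixed_normal (G : Type*) [Group G] [Finite G]
    (A : Subgroup (MulAut G)) (hcop : Nat.Coprime (Nat.card G) (Nat.card A))
    (N : Subgroup G) [N.Normal] (hNinv : ∀ α ∈ A, N.map α.toMonoidHom = N)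
    (hfix : ∀ n ∈ N, ∀ α ∈ A, α n = n) :
    ∀ x ∈ autCommutatorSubgroup A, ∀ n ∈ N, x * n = n * x :=
  commutator_centralizes_fixed_normal_general G A N hfix
end

section
/- For n ≥ 5, let G = S_n be the symmetric group and α conjugation by a transposition. Then every pair of elements of I_G(α) = { g⁻¹ g^α : g ∈ G } generates a soluble subgroup, but [G,α] = ⟨I_G(α)⟩ is not soluble. -/
/-!
Writing `t = (i j)`, every element of `I_G(α)` has the form `g⁻¹ t g · t⁻¹ = s t` with `s` a
transposition. Two such elements lie in the group generated by three transpositions. Either the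
supports of these three span at most four points, or one support is disjoint from the other two;
in both cases the group sits inside a product of two commuting symmetric groups of degree at most
four, and `S₄` is soluble (its alternating group is an extension of the Klein four group). On the
other hand `(s t)(s' t)⁻¹ = s s'` runs over all products of two transpositions, which generate
`Aₙ`, and `Aₙ` is insoluble for `n ≥ 5`.
-/

open Equiv Equiv.Perm Subgroup
open scoped Finset

section

variable {G : Type*} [Group G]

theorem Subgroup.isSolvable_of_le {H K : Subgroup G} (hHK : H ≤ K) [Group.IsSolvable K] :
    Group.IsSolvable H :=
  Group.isSolvable_of_isSolvable_injective (inclusion_injective hHK)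

theorem Subgroup.isSolvable_sup_of_commute {H K : Subgroup G} [Group.IsSolvable H]
    [Group.IsSolvable K] (hHK : ∀ h ∈ H, ∀ k ∈ K, Commute h k) :
    Group.IsSolvable ↥(H ⊔ K) := by
  rw [← H.range_subtype, ← K.range_subtype,
    ← MonoidHom.noncommCoprod_range H.subtype K.subtype fun h k ↦ hHK h h.2 k k.2]
  exact Group.isSolvable_of_surjective (MonoidHom.rangeRestrict_surjective _)

theorem inv_mul_conj_eq (t g : G) : g⁻¹ * MulAut.conj t g = g⁻¹ * t * g * t⁻¹ := by
  simp only [MulAut.conj_apply, mul_assoc]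

theorem exists_inv_mul_conj_eq_of_isConj {t s : G} (h : IsConj t s) :
    ∃ g, s * t⁻¹ = g⁻¹ * MulAut.conj t g := by
  obtain ⟨c, rfl⟩ := isConj_iff.mp h
  exact ⟨c⁻¹, by rw [inv_mul_conj_eq, inv_inv]⟩

theorem mul_inv_mem_closure_inv_mul_conj {t s₁ s₂ : G} (h₁ : IsConj t s₁)
    (h₂ : IsConj t s₂) :
    s₁ * s₂⁻¹ ∈ closure {x | ∃ g, x = g⁻¹ * MulAut.conj t g} := by
  rw [show s₁ * s₂⁻¹ = s₁ * t⁻¹ * (s₂ * t⁻¹)⁻¹ by group]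
  exact mul_mem (subset_closure (exists_inv_mul_conj_eq_of_isConj h₁))
    (inv_mem (subset_closure (exists_inv_mul_conj_eq_of_isConj h₂)))

end

namespace Equiv.Perm

variable {α : Type*} [DecidableEq α]

theorem isSolvable_of_isSolvable_alternatingGroup [Fintype α]
    [Group.IsSolvable (alternatingGroup α)] : Group.IsSolvable (Perm α) :=
  Group.isSolvable_of_ker_le_range (alternatingGroup α).subtype sign
    (by rw [range_subtype, alternatingGroup_eq_sign_ker])

theorem isSolvable_alternatingGroup_of_card_eq_four [Fintype α] (h4 : Nat.card α = 4) :
    Group.IsSolvable (alternatingGroup α) := by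
  have : IsKleinFour (alternatingGroup.kleinFour α) := alternatingGroup.kleinFour_isKleinFour h4
  have : Group.IsSolvable (alternatingGroup.kleinFour α) :=
    Group.isSolvable_of_comm (mul_comm_of_exponent_two IsKleinFour.exponent_two)
  refine Group.isSolvable_of_ker_le_range (alternatingGroup.kleinFour α).subtype
    Abelianization.of ?_
  rw [range_subtype, Abelianization.ker_of, alternatingGroup.kleinFour_eq_commutator h4]

theorem isSolvable_of_card_le_four {β : Type*} [Fintype β] (h4 : Fintype.card β ≤ 4) :
    Group.IsSolvable (Perm β) := by
  have : Group.IsSolvable (alternatingGroup (Fin 4)) :=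
    isSolvable_alternatingGroup_of_card_eq_four (Nat.card_fin 4)
  have : Group.IsSolvable (Perm (Fin 4)) := isSolvable_of_isSolvable_alternatingGroup
  obtain ⟨ι⟩ := Function.Embedding.nonempty_of_card_le (h4.trans_eq (Fintype.card_fin 4).symm)
  exact Group.isSolvable_of_isSolvable_injective (viaEmbeddingHom_injective ι)

theorem isSolvable_range_ofSubtype {B : Finset α} (hB : #B ≤ 4) :
    Group.IsSolvable (ofSubtype : Perm {x // x ∈ B} →* Perm α).range := by
  have := isSolvable_of_card_le_four (β := {x // x ∈ B}) (by simpa using hB)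
  exact Group.isSolvable_of_surjective (MonoidHom.rangeRestrict_surjective _)

variable [Fintype α]

theorem support_subset_of_mem_range_ofSubtype {B : Finset α} {σ : Perm α}
    (hσ : σ ∈ (ofSubtype : Perm {x // x ∈ B} →* Perm α).range) : σ.support ⊆ B :=
  Finset.coe_subset.mp (mem_range_ofSubtype_iff.mp hσ)

theorem isSolvable_closure_of_support_subset_or {S : Set (Perm α)} {B C : Finset α}
    (hB : #B ≤ 4) (hC : #C ≤ 4) (hBC : _root_.Disjoint B C)
    (hS : ∀ σ ∈ S, σ.support ⊆ B ∨ σ.support ⊆ C) : Group.IsSolvable (closure S) := by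
  set P := (ofSubtype : Perm {x // x ∈ B} →* Perm α).range
  set Q := (ofSubtype : Perm {x // x ∈ C} →* Perm α).range
  have := isSolvable_range_ofSubtype hB
  have := isSolvable_range_ofSubtype hC
  have := isSolvable_sup_of_commute (H := P) (K := Q) fun σ hσ τ hτ ↦
    (disjoint_iff_disjoint_support.mpr <| hBC.mono (support_subset_of_mem_range_ofSubtype hσ)
      (support_subset_of_mem_range_ofSubtype hτ)).commute
  refine isSolvable_of_le (K := P ⊔ Q) <| (closure_le _).mpr fun σ hσ ↦ (hS σ hσ).elim
    (fun h ↦ mem_sup_left (mem_range_ofSubtype_iff.mpr (Finset.coe_subset.mpr h)))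
    (fun h ↦ mem_sup_right (mem_range_ofSubtype_iff.mpr (Finset.coe_subset.mpr h)))

theorem isSolvable_closure_of_card_support_le_two {σ₁ σ₂ σ₃ : Perm α}
    (h₁ : #σ₁.support ≤ 2) (h₂ : #σ₂.support ≤ 2) (h₃ : #σ₃.support ≤ 2) :
    Group.IsSolvable (closure {σ₁, σ₂, σ₃}) := by
  set s₁ := σ₁.support
  set s₂ := σ₂.support
  set s₃ := σ₃.support
  have hunion {s t : Finset α} (hs : #s ≤ 2) (ht : #t ≤ 2) : #(s ∪ t) ≤ 4 :=
    (Finset.card_union_le s t).trans (by omega)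
  have hmeet {s t : Finset α} (hst : ¬_root_.Disjoint s t) : #(s ∪ t) < #s + #t :=
    (Finset.card_union_le s t).lt_of_ne (mt Finset.card_union_eq_card_add_card.mp hst)
  by_cases d₃ : _root_.Disjoint (s₁ ∪ s₂) s₃
  · refine isSolvable_closure_of_support_subset_or (hunion h₁ h₂) (by omega) d₃ ?_
    rintro σ (rfl | rfl | rfl) <;> simp [s₁, s₂, s₃]
  by_cases d₂ : _root_.Disjoint (s₁ ∪ s₃) s₂
  · refine isSolvable_closure_of_support_subset_or (hunion h₁ h₃) (by omega) d₂ ?_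
    rintro σ (rfl | rfl | rfl) <;> simp [s₁, s₂, s₃]
  by_cases d₁ : _root_.Disjoint (s₂ ∪ s₃) s₁
  · refine isSolvable_closure_of_support_subset_or (hunion h₂ h₃) (by omega) d₁ ?_
    rintro σ (rfl | rfl | rfl) <;> simp [s₁, s₂, s₃]
  have hB : #(s₁ ∪ s₂ ∪ s₃) ≤ 4 := by
    rcases not_and_or.mp (Finset.disjoint_union_left.not.mp d₃) with d₁₃ | d₂₃
    · rw [show s₁ ∪ s₂ ∪ s₃ = s₁ ∪ s₃ ∪ s₂ by ac_rfl]
      have := hmeet d₁₃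
      have := hmeet d₂
      omega
    · rw [show s₁ ∪ s₂ ∪ s₃ = s₂ ∪ s₃ ∪ s₁ by ac_rfl]
      have := hmeet d₂₃
      have := hmeet d₁
      omega
  refine isSolvable_closure_of_support_subset_or hB (by simp) (Finset.disjoint_empty_right _) ?_
  rintro σ (rfl | rfl | rfl) <;> left <;> intro x <;> simp +contextual [s₁, s₂, s₃]

theorem alternatingGroup_le_of_isSwap_mul_mem {K : Subgroup (Perm α)}
    (hK : ∀ σ τ : Perm α, IsSwap σ → IsSwap τ → σ * τ ∈ K) :
    alternatingGroup α ≤ K := by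
  rw [← closure_three_cycles_eq_alternating, closure_le]
  intro g hg
  obtain ⟨a, ha⟩ := hg.isCycle.nonempty_support
  have hga : g a ≠ a := mem_support.mp ha
  rw [SetLike.mem_coe, hg.eq_swap_mul_swap_iff_mem_support.mpr ha]
  exact hK _ _ ⟨a, g a, hga.symm, rfl⟩ ⟨g a, g (g a), g.injective.ne hga.symm, rfl⟩

end Equiv.Perm

theorem symmetric_group_counterexample (n : ℕ) (hn : 5 ≤ n)
    (i j : Fin n) (hij : i ≠ j) :
    (∀ x ∈ {x : Equiv.Perm (Fin n) | ∃ g, x = g⁻¹ * (MulAut.conj (Equiv.swap i j)) g},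
      ∀ y ∈ {x : Equiv.Perm (Fin n) | ∃ g, x = g⁻¹ * (MulAut.conj (Equiv.swap i j)) g},
        IsSolvable (Subgroup.closure {x, y})) ∧
    ¬ IsSolvable (Subgroup.closure
        {x : Equiv.Perm (Fin n) | ∃ g, x = g⁻¹ * (MulAut.conj (Equiv.swap i j)) g}) := by
  set t := swap i j
  set I := {x : Perm (Fin n) | ∃ g, x = g⁻¹ * MulAut.conj t g}
  have ht : #t.support ≤ 2 := (card_support_swap hij).le
  refine ⟨?_, fun hsolv ↦ ?_⟩
  · rintro _ ⟨g, rfl⟩ _ ⟨h, rfl⟩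
    have hconj (g : Perm (Fin n)) : #(g⁻¹ * t * g).support ≤ 2 := by
      simpa only [inv_inv] using (card_support_conj (σ := g⁻¹) (τ := t)).trans_le ht
    have := isSolvable_closure_of_card_support_le_two (hconj g) (hconj h) ht
    refine isSolvable_of_le (K := closure {g⁻¹ * t * g, h⁻¹ * t * h, t}) <|
      (closure_le _).mpr ?_
    rintro _ (rfl | rfl) <;> rw [inv_mul_conj_eq] <;>
      exact mul_mem (subset_closure (by simp)) (inv_mem (subset_closure (by simp)))
  · have : Group.IsSolvable (closure I) := hsolv
    have hA : alternatingGroup (Fin n) ≤ closure I :=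
      alternatingGroup_le_of_isSwap_mul_mem fun _ _ ⟨a, b, hab, hσ⟩ ⟨c, d, hcd, hτ⟩ ↦ by
        rw [hσ, hτ, ← swap_inv c d]
        exact mul_inv_mem_closure_inv_mul_conj (isConj_swap hij hab) (isConj_swap hij hcd)
    have : Group.IsSolvable (alternatingGroup (Fin n)) := isSolvable_of_le hA
    exact not_isSolvable (Fin n) (by simpa using hn) isSolvable_of_isSolvable_alternatingGroup
end

section
/- Let G be a finite group, M an abelian normal subgroup of G, α a coprime automorphism of G leaving M invariant, and x = [g,α] for some g ∈ G with gx ∈ G. If [M,x] ∩ [M,α] = 1 (where x denotes the inner automorphism by x composed appropriately), then C_M(xα⁻¹) ≤ C_M(α). -/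
theorem fixed_points_of_twisted_action_general (G : Type*) [Group G]
    (α : MulAut G) (M : Subgroup G) (x : G)
    (hint : Subgroup.closure {y : G | ∃ m ∈ M, y = m⁻¹ * x⁻¹ * m * x} ⊓
            Subgroup.closure {y : G | ∃ m ∈ M, y = m⁻¹ * α m} = ⊥) :
    ∀ m ∈ M, x⁻¹ * m * x = α m → α m = m := by
  intro m hm hconj
  -- For such `m` the commutators `[m, x]` and `[m, α]` coincide.
  have hx : m⁻¹ * α m ∈ Subgroup.closure {y : G | ∃ m ∈ M, y = m⁻¹ * x⁻¹ * m * x} :=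
    Subgroup.subset_closure ⟨m, hm, by rw [← hconj]; group⟩
  have hα : m⁻¹ * α m ∈ Subgroup.closure {y : G | ∃ m ∈ M, y = m⁻¹ * α m} :=
    Subgroup.subset_closure ⟨m, hm, rfl⟩
  exact (inv_mul_eq_one.mp (Subgroup.disjoint_def.mp (disjoint_iff.mpr hint) hx hα)).symm

theorem fixed_points_of_twisted_action (G : Type*) [Group G] [Finite G]
    (α : MulAut G) (hcop : Nat.Coprime (Nat.card G) (orderOf α))
    (M : Subgroup G) [M.Normal] (hMab : ∀ a ∈ M, ∀ b ∈ M, a * b = b * a)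
    (hMinv : M.map α.toMonoidHom = M)
    (g : G) (x : G) (hx : x = g⁻¹ * α g)
    (hint : Subgroup.closure {y : G | ∃ m ∈ M, y = m⁻¹ * x⁻¹ * m * x} ⊓
            Subgroup.closure {y : G | ∃ m ∈ M, y = m⁻¹ * α m} = ⊥) :
    ∀ m ∈ M, x⁻¹ * m * x = α m → α m = m :=
  fixed_points_of_twisted_action_general G α M x hint
end
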